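/- arXiv:1606.01553 — 2 statements merged into one kernel-verified Lean document; each statement's English description precedes it below -/
import Mathlib

section
/- For every natural number k ≥ 2, every walk (equivalently, every path) in the Farey graph from the vertex ∞ to the vertex F(k+1)/F(k) must pass through the vertex F(k)/F(k−1) or through the vertex F(k−1)/F(k−2). -/
open OnePoint

/-- Numerator of a Farey vertex: `∞` is represented as `1/0`, and a rational
`p` is represented in lowest terms as `p.num / p.den`. -/
def vNum (x : OnePoint ℚ) : ℤ := OnePoint.rec 1 Rat.num x

/-- Denominator of a Farey vertex. -/
def vDen (x : OnePoint ℚ) : ℤ := OnePoint.rec 0 (fun p => (p.den : ℤ)) x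

/-- The Farey graph: vertices are `ℚ ∪ {∞}`, and two distinct vertices with
lowest-terms representations `a/b` and `c/d` are adjacent iff `|a·d − b·c| = 1`. -/
def fareyGraph : SimpleGraph (OnePoint ℚ) where
  Adj x y := x ≠ y ∧ |vNum x * vDen y - vDen x * vNum y| = 1
  symm := by
    constructor
    rintro x y ⟨hxy, h⟩
    refine ⟨hxy.symm, ?_⟩
    rw [show vNum y * vDen x - vDen y * vNum x
        = -(vNum x * vDen y - vDen x * vNum y) by ring, abs_neg]
    exact h
  loopless := by
    constructor
    rintro x ⟨hxx, -⟩
    exact hxx rfl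

/-- The shifted Fibonacci sequence `F k = Nat.fib (k+1)`. -/
def F : ℕ → ℕ
  | 0 => 1
  | 1 => 1
  | k + 2 => F (k + 1) + F k

/-- The Farey vertex `F (k+1) / F k`. -/
def fibVertex (k : ℕ) : OnePoint ℚ := (((F (k + 1) : ℚ) / (F k : ℚ) : ℚ) : OnePoint ℚ)

/- ## auxiliary lemmas -/

lemma rat_lt_iff (q r : ℚ) : q < r ↔ q.num * (r.den:ℤ) < r.num * (q.den:ℤ) := by
  rw [← Rat.num_div_den q, ← Rat.num_div_den r, div_lt_div_iff₀ (by positivity) (by positivity)]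
  rw [Rat.num_div_den, Rat.num_div_den]
  exact_mod_cast Iff.rfl

lemma between_den (x z y : ℚ) (hadj : |x.num * (y.den:ℤ) - x.den * y.num| = 1)
    (h1 : x < z) (h2 : z < y) : (x.den:ℤ) + y.den ≤ z.den := by
  rw [rat_lt_iff] at h1 h2
  have hb : (0:ℤ) < x.den := by exact_mod_cast x.pos
  have he : (0:ℤ) < z.den := by exact_mod_cast z.pos
  have hg : (0:ℤ) < y.den := by exact_mod_cast y.pos
  have k1 : 1 ≤ z.num * x.den - x.num * z.den := by linarith
  have k2 : 1 ≤ y.num * z.den - z.num * y.den := by linarith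
  have key : (z.den:ℤ) * (x.den * y.num - x.num * y.den)
      = y.den * (z.num * x.den - x.num * z.den) + x.den * (y.num * z.den - z.num * y.den) := by
    ring
  rcases abs_eq (by norm_num : (0:ℤ) ≤ 1) |>.mp hadj with h | h
  · -- x.num*y.den - x.den*y.num = 1, so x.den*y.num - x.num*y.den = -1
    nlinarith [mul_le_mul_of_nonneg_left k1 hg.le, mul_le_mul_of_nonneg_left k2 hb.le]
  · nlinarith [mul_le_mul_of_nonneg_left k1 hg.le, mul_le_mul_of_nonneg_left k2 hb.le]

lemma adj_comm' (x y : ℚ) : |x.num * (y.den:ℤ) - x.den * y.num|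
    = |y.num * (x.den:ℤ) - y.den * x.num| := by
  rw [show y.num * (x.den:ℤ) - y.den * x.num
      = -(x.num * (y.den:ℤ) - x.den * y.num) by ring, abs_neg]

lemma no_cross (lo hi x y : ℚ) (hadj : |lo.num * (hi.den:ℤ) - lo.den * hi.num| = 1)
    (hxy : |x.num * (y.den:ℤ) - x.den * y.num| = 1)
    (hx1 : lo < x) (hx2 : x < hi) (hy : y < lo ∨ hi < y) : False := by
  have hmid := between_den lo x hi hadj hx1 hx2
  have hb : (0:ℤ) < x.den := by exact_mod_cast x.pos
  have hd : (0:ℤ) < y.den := by exact_mod_cast y.pos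
  rcases hy with hy | hy
  · have := between_den y lo x (by rw [adj_comm']; exact hxy) hy hx1
    linarith
  · have := between_den x hi y hxy hx2 hy
    linarith

/- ## Fibonacci facts -/

lemma F_pos : ∀ n, 0 < F n
  | 0 => Nat.one_pos
  | 1 => Nat.one_pos
  | n + 2 => by rw [F]; exact Nat.add_pos_left (F_pos (n+1)) _

lemma F_le_succ : ∀ n, F n ≤ F (n + 1)
  | 0 => le_refl _
  | n + 1 => by rw [show F (n+2) = F (n+1) + F n from rfl]; exact Nat.le_add_right _ _

lemma F_succ_le_two : ∀ n, F (n + 1) ≤ 2 * F n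
  | 0 => by norm_num [F]
  | n + 1 => by
      rw [show F (n+2) = F (n+1) + F n from rfl, two_mul]
      exact Nat.add_le_add_left (F_le_succ n) _

lemma F_eq_fib : ∀ n, F n = Nat.fib (n + 1)
  | 0 => rfl
  | 1 => rfl
  | n + 2 => by
      show F (n+1) + F n = Nat.fib ((n+1) + 2)
      rw [Nat.fib_add_two, F_eq_fib (n+1), F_eq_fib n]
      exact Nat.add_comm _ _

lemma F_coprime (n : ℕ) : Nat.Coprime (F (n + 1)) (F n) := by
  rw [F_eq_fib, F_eq_fib]
  exact (Nat.fib_coprime_fib_succ (n+1)).symm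

lemma cassini : ∀ n, (F (n+2) : ℤ) * F n - (F (n+1):ℤ) * F (n+1) = (-1)^n
  | 0 => by norm_num [F]
  | n + 1 => by
      have ih := cassini n
      have h3 : (F (n+3) : ℤ) = F (n+2) + F (n+1) := by
        rw [show F (n+3) = F (n+2) + F (n+1) from rfl]; push_cast; ring
      have h2 : (F (n+2) : ℤ) = F (n+1) + F n := by
        rw [show F (n+2) = F (n+1) + F n from rfl]; push_cast; ring
      have hp : ((-1:ℤ))^(n+1) = -((-1)^n) := by ring
      rw [hp]
      nlinarith [ih, h3, h2]

lemma catalanE (n : ℕ) : (F (n+3) : ℤ) * F n - (F (n+2):ℤ) * F (n+1) = (-1)^n := by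
  have h3 : (F (n+3) : ℤ) = F (n+2) + F (n+1) := by
    rw [show F (n+3) = F (n+2) + F (n+1) from rfl]; push_cast; ring
  have h2 : (F (n+2) : ℤ) = F (n+1) + F n := by
    rw [show F (n+2) = F (n+1) + F n from rfl]; push_cast; ring
  have := cassini n
  nlinarith [this, h3, h2]

/-- the rational `F (n+1) / F n` -/
def u (n : ℕ) : ℚ := (F (n+1) : ℚ) / (F n : ℚ)

lemma u_num (n : ℕ) : (u n).num = (F (n+1) : ℤ) := by
  rw [u, show ((F (n+1) : ℚ)) = ((F (n+1) : ℤ) : ℚ) by push_cast; ring,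
    show ((F n : ℚ)) = ((F n : ℤ) : ℚ) by push_cast; ring]
  exact Rat.num_div_eq_of_coprime (by exact_mod_cast F_pos n) (by
    simpa [Int.natAbs_natCast] using F_coprime n)

lemma u_den (n : ℕ) : ((u n).den : ℤ) = (F n : ℤ) := by
  rw [u, show ((F (n+1) : ℚ)) = ((F (n+1) : ℤ) : ℚ) by push_cast; ring,
    show ((F n : ℚ)) = ((F n : ℤ) : ℚ) by push_cast; ring]
  exact Rat.den_div_eq_of_coprime (by exact_mod_cast F_pos n) (by
    simpa [Int.natAbs_natCast] using F_coprime n)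

lemma one_le_u (n : ℕ) : 1 ≤ u n := by
  rw [u]
  rw [le_div_iff₀ (by exact_mod_cast F_pos n)]
  rw [one_mul]
  exact_mod_cast F_le_succ n

lemma u_le_two (n : ℕ) : u n ≤ 2 := by
  rw [u, div_le_iff₀ (by exact_mod_cast F_pos n)]
  exact_mod_cast F_succ_le_two n

/- ## The walk lemma -/

lemma walk_support (lo hi : ℚ) (hadj : |lo.num * (hi.den:ℤ) - lo.den * hi.num| = 1)
    (h1 : 1 ≤ lo) (h2 : hi ≤ 2) :
    ∀ {a b : OnePoint ℚ} (w : fareyGraph.Walk a b),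
      (¬ ∃ q : ℚ, a = ↑q ∧ lo < q ∧ q < hi) →
      (∃ q : ℚ, b = ↑q ∧ lo < q ∧ q < hi) →
      ((↑lo : OnePoint ℚ) ∈ w.support ∨ (↑hi : OnePoint ℚ) ∈ w.support) := by
  intro a b w
  induction w with
  | nil => intro ha hb; exact absurd hb ha
  | @cons a c b h p ih =>
    intro ha hb
    by_cases hc : ∃ q : ℚ, c = ↑q ∧ lo < q ∧ q < hi
    · obtain ⟨q, rfl, hq1, hq2⟩ := hc
      -- analyse the edge a ~ q
      induction a using OnePoint.rec with
      | infty =>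
        exfalso
        have h2' := h.2
        have : vNum (∞ : OnePoint ℚ) = 1 := rfl
        have hden : |((1:ℤ)) * (q.den:ℤ) - 0 * q.num| = 1 := h2'
        have hden1 : (q.den : ℤ) = 1 := by
          rwa [one_mul, zero_mul, sub_zero, abs_of_pos (by exact_mod_cast q.pos)] at hden
        have hq : ((q.num : ℚ)) = q := by
          conv_rhs => rw [← Rat.num_div_den q]
          rw [show ((q.den:ℚ)) = 1 by exact_mod_cast hden1]
          ring
        have hn1 : (1:ℚ) < (q.num : ℚ) := by rw [hq]; exact lt_of_le_of_lt h1 hq1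
        have hn2 : ((q.num : ℚ)) < 2 := by rw [hq]; exact lt_of_lt_of_le hq2 h2
        have : (1:ℤ) < q.num := by exact_mod_cast hn1
        have : q.num < 2 := by exact_mod_cast hn2
        omega
      | coe r =>
        have hr : ¬ (lo < r ∧ r < hi) := by
          intro hcon
          exact ha ⟨r, rfl, hcon⟩
        by_cases hrlo : r = lo
        · left
          subst hrlo
          exact SimpleGraph.Walk.start_mem_support _
        by_cases hrhi : r = hi
        · right
          subst hrhi
          exact SimpleGraph.Walk.start_mem_support _
        exfalso
        have hadjrq : |r.num * (q.den:ℤ) - r.den * q.num| = 1 := h.2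
        apply no_cross lo hi q r hadj (by rw [adj_comm']; exact hadjrq) hq1 hq2
        rcases not_and_or.mp hr with hrle | hrle
        · left
          rcases lt_or_eq_of_le (not_lt.mp hrle) with h' | h'
          · exact h'
          · exact absurd h'.symm (Ne.symm hrlo)
        · right
          rcases lt_or_eq_of_le (not_lt.mp hrle) with h' | h'
          · exact h'
          · exact absurd h'.symm hrhi
    · have := ih hc hb
      rw [SimpleGraph.Walk.support_cons]
      exact this.imp (List.mem_cons_of_mem _) (List.mem_cons_of_mem _)

set_option maxHeartbeats 1000000 in
/-- For `k ≥ 2`, every walk in the Farey graph from `∞` to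
`F(k+1)/F(k)` passes through `F(k)/F(k−1)` or through `F(k−1)/F(k−2)`. -/
theorem farey_walk_through_fib (k : ℕ) (hk : 2 ≤ k)
    (w : fareyGraph.Walk ∞ (fibVertex k)) :
    fibVertex (k - 1) ∈ w.support ∨ fibVertex (k - 2) ∈ w.support := by
  obtain ⟨j, rfl⟩ : ∃ j, k = j + 2 := ⟨k - 2, by omega⟩
  have e1 : j + 2 - 1 = j + 1 := by omega
  have e2 : j + 2 - 2 = j := by omega
  rw [e1, e2]
  show ((u (j+1) : ℚ) : OnePoint ℚ) ∈ w.support ∨ ((u j : ℚ) : OnePoint ℚ) ∈ w.support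
  have hFj : (0:ℤ) < F j := by exact_mod_cast F_pos j
  have hFj1 : (0:ℤ) < F (j+1) := by exact_mod_cast F_pos (j+1)
  have hFj2 : (0:ℤ) < F (j+2) := by exact_mod_cast F_pos (j+2)
  have hC := cassini j
  have hC1 := cassini (j+1)
  have hE := catalanE j
  have hE1 : (F (j+3) : ℤ) * F (j+1) - (F (j+2):ℤ) * F (j+2) = (-1)^(j+1) := hC1
  have hna : ¬ ∃ q : ℚ, (∞ : OnePoint ℚ) = ↑q ∧ (min (u j) (u (j+1))) < q ∧ q < max (u j) (u (j+1)) := by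
    rintro ⟨q, hq, -⟩
    exact (OnePoint.infty_ne_coe q) hq
  rcases Nat.even_or_odd j with hpar | hpar
  · -- j even : u j < u (j+2) < u (j+1)
    have hsign : ((-1:ℤ))^j = 1 := hpar.neg_one_pow
    have hlohi : u j < u (j+1) := by
      rw [rat_lt_iff, u_num, u_num, u_den, u_den]
      nlinarith [hC, hsign]
    have ht1 : u j < u (j+2) := by
      rw [rat_lt_iff, u_num, u_num, u_den, u_den]
      nlinarith [hE, hsign]
    have ht2 : u (j+2) < u (j+1) := by
      rw [rat_lt_iff, u_num, u_num, u_den, u_den]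
      have : ((-1:ℤ))^(j+1) = -1 := by rw [pow_succ, hsign]; ring
      nlinarith [hE1, this]
    have hadj : |(u j).num * ((u (j+1)).den:ℤ) - (u j).den * (u (j+1)).num| = 1 := by
      rw [u_num, u_num, u_den, u_den]
      rw [show (F (j+1) : ℤ) * F (j+1) - (F j:ℤ) * F (j+2) = -((F (j+2):ℤ) * F j - (F (j+1):ℤ) * F (j+1)) by ring, hC, hsign]
      norm_num
    have := walk_support (u j) (u (j+1)) hadj (one_le_u j) (u_le_two (j+1)) w
      (by rintro ⟨q, hq, -⟩; exact (OnePoint.infty_ne_coe q) hq)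
      ⟨u (j+2), rfl, ht1, ht2⟩
    exact this.symm
  · -- j odd : u (j+1) < u (j+2) < u j
    have hsign : ((-1:ℤ))^j = -1 := hpar.neg_one_pow
    have hlohi : u (j+1) < u j := by
      rw [rat_lt_iff, u_num, u_num, u_den, u_den]
      nlinarith [hC, hsign]
    have ht1 : u (j+1) < u (j+2) := by
      rw [rat_lt_iff, u_num, u_num, u_den, u_den]
      have : ((-1:ℤ))^(j+1) = 1 := by rw [pow_succ, hsign]; ring
      nlinarith [hE1, this]
    have ht2 : u (j+2) < u j := by
      rw [rat_lt_iff, u_num, u_num, u_den, u_den]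
      nlinarith [hE, hsign]
    have hadj : |(u (j+1)).num * ((u j).den:ℤ) - (u (j+1)).den * (u j).num| = 1 := by
      rw [u_num, u_num, u_den, u_den]
      rw [hC, hsign]
      norm_num
    have := walk_support (u (j+1)) (u j) hadj (one_le_u (j+1)) (u_le_two j) w
      (by rintro ⟨q, hq, -⟩; exact (OnePoint.infty_ne_coe q) hq)
      ⟨u (j+2), rfl, ht1, ht2⟩
    exact this
end

section
/- Each edge of the Farey graph lies in exactly two triangles, given by the mediant and the difference. Precisely: let a, b, c, d be integers with gcd(a,b) = 1, gcd(c,d) = 1 and |a·d − b·c| = 1. If e, f are integers with gcd(e,f) = 1 satisfying |a·f − b·e| = 1 and |c·f − d·e| = 1, then (e,f) equals (a+c, b+d), (−(a+c), −(b+d)), (a−c, b−d), or (−(a−c), −(b−d)). Consequently the only Farey-graph vertices adjacent to both a/b and c/d are (a+c)/(b+d) and (a−c)/(b−d). -/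
open OnePoint

/-- The Farey vertex determined by a pair of integers `(e, f)`: the rational
`e/f` if `f ≠ 0`, and `∞` if `f = 0`. -/
def fareySlope (e f : ℤ) : OnePoint ℚ :=
  if f = 0 then ∞ else (((e : ℚ) / (f : ℚ) : ℚ) : OnePoint ℚ)

lemma vNum_infty : vNum ∞ = 1 := rfl
lemma vDen_infty : vDen ∞ = 0 := rfl
lemma vNum_coe (p : ℚ) : vNum (p : OnePoint ℚ) = p.num := rfl
lemma vDen_coe (p : ℚ) : vDen (p : OnePoint ℚ) = p.den := rfl

lemma fareySlope_neg (e f : ℤ) : fareySlope (-e) (-f) = fareySlope e f := by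
  unfold fareySlope
  rcases eq_or_ne f 0 with rfl | hf
  · simp
  · rw [if_neg (by simpa using hf), if_neg hf]
    push_cast
    rw [neg_div_neg_eq]

lemma slope_repr (e f : ℤ) (hef : Int.gcd e f = 1) :
    ∃ ε : ℤ, (ε = 1 ∨ ε = -1) ∧ vNum (fareySlope e f) = ε * e ∧ vDen (fareySlope e f) = ε * f := by
  rcases lt_trichotomy f 0 with hf | rfl | hf
  · refine ⟨-1, Or.inr rfl, ?_, ?_⟩ <;>
    · rw [← fareySlope_neg, fareySlope, if_neg (show ¬(-f = 0) by omega)]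
      first
      | rw [vNum_coe, Rat.num_div_eq_of_coprime (show (0:ℤ) < -f by omega)
          (by simpa [Int.gcd, Int.natAbs_neg] using hef)]
        ring
      | rw [vDen_coe, Rat.den_div_eq_of_coprime (show (0:ℤ) < -f by omega)
          (by simpa [Int.gcd, Int.natAbs_neg] using hef)]
        ring
  · have : e = 1 ∨ e = -1 := by
      have := hef; simp [Int.gcd] at this; omega
    refine ⟨e, this, ?_, ?_⟩ <;> rw [fareySlope, if_pos rfl]
    · rw [vNum_infty]; rcases this with rfl | rfl <;> norm_num
    · rw [vDen_infty]; ring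
  · refine ⟨1, Or.inl rfl, ?_, ?_⟩ <;>
    · rw [fareySlope, if_neg (by omega)]
      first
      | rw [vNum_coe, Rat.num_div_eq_of_coprime hf (by simpa [Int.gcd] using hef)]; ring
      | rw [vDen_coe, Rat.den_div_eq_of_coprime hf (by simpa [Int.gcd] using hef)]; ring

lemma vertex_repr (x : OnePoint ℚ) :
    Int.gcd (vNum x) (vDen x) = 1 ∧ fareySlope (vNum x) (vDen x) = x := by
  induction x using OnePoint.rec with
  | infty =>
    refine ⟨rfl, ?_⟩
    rw [vDen_infty, fareySlope, if_pos rfl]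
  | coe p =>
    constructor
    · rw [vNum_coe, vDen_coe]
      simpa [Int.gcd] using p.reduced
    · rw [vNum_coe, vDen_coe, fareySlope, if_neg (by exact_mod_cast p.den_ne_zero)]
      push_cast
      rw [Rat.num_div_den]

lemma adj_iff (x y : OnePoint ℚ) :
    fareyGraph.Adj x y ↔ |vNum x * vDen y - vDen x * vNum y| = 1 := by
  constructor
  · exact fun h => h.2
  · intro h
    refine ⟨?_, h⟩
    rintro rfl
    rw [mul_comm, sub_self, abs_zero] at h
    exact one_ne_zero h.symm

lemma part1 (a b c d : ℤ) (h : |a * d - b * c| = 1) (e f : ℤ)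
    (h1 : |a * f - b * e| = 1) (h2 : |c * f - d * e| = 1) :
    (e, f) = (a + c, b + d) ∨ (e, f) = (-(a + c), -(b + d)) ∨
      (e, f) = (a - c, b - d) ∨ (e, f) = (-(a - c), -(b - d)) := by
  have hs : a * d - b * c = 1 ∨ a * d - b * c = -1 := abs_eq (by norm_num) |>.mp h
  have hx : e * d - f * c = 1 ∨ e * d - f * c = -1 := by
    have : |e * d - f * c| = 1 := by
      rw [show e * d - f * c = -(c * f - d * e) by ring, abs_neg]; exact h2
    exact abs_eq (by norm_num) |>.mp this
  have hy : a * f - b * e = 1 ∨ a * f - b * e = -1 := abs_eq (by norm_num) |>.mp h1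
  have hss : (a * d - b * c) * (a * d - b * c) = 1 := by
    rcases hs with h' | h' <;> rw [h'] <;> norm_num
  have he : e = ((a*d-b*c)*(e*d-f*c))*a + ((a*d-b*c)*(a*f-b*e))*c := by
    calc e = ((a*d-b*c)*(a*d-b*c))*e := by rw [hss]; ring
    _ = _ := by ring
  have hf : f = ((a*d-b*c)*(e*d-f*c))*b + ((a*d-b*c)*(a*f-b*e))*d := by
    calc f = ((a*d-b*c)*(a*d-b*c))*f := by rw [hss]; ring
    _ = _ := by ring
  rcases hs with h' | h' <;> rcases hx with h'' | h'' <;> rcases hy with h''' | h''' <;>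
    rw [h', h'', h'''] at he hf <;>
    simp only [Prod.mk.injEq] <;> omega


lemma gcd_comb (a b c d : ℤ) (h : |a * d - b * c| = 1) : Int.gcd (a + c) (b + d) = 1 := by
  have h1 : (Int.gcd (a + c) (b + d) : ℤ) ∣ (a + c) := Int.gcd_dvd_left _ _
  have h2 : (Int.gcd (a + c) (b + d) : ℤ) ∣ (b + d) := Int.gcd_dvd_right _ _
  have h3 : (Int.gcd (a + c) (b + d) : ℤ) ∣ (a * d - b * c) := by
    have := dvd_sub (h1.mul_left d) (h2.mul_left c)
    rwa [show d * (a + c) - c * (b + d) = a * d - b * c by ring] at this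
  have h4 : (Int.gcd (a + c) (b + d) : ℤ) ∣ 1 := by
    rcases abs_eq (by norm_num : (0:ℤ) ≤ 1) |>.mp h with h' | h'
    · rwa [h'] at h3
    · rw [h'] at h3; exact (dvd_neg.mp h3)
  exact_mod_cast Int.eq_one_of_dvd_one (by positivity) h4

lemma eps_abs {ε u : ℤ} (hε : ε = 1 ∨ ε = -1) : |ε * u| = |u| := by
  rcases hε with rfl | rfl <;> simp


/-- Each edge of the Farey graph lies in exactly two triangles,
given by the mediant and the difference. -/
theorem farey_edge_two_triangles (a b c d : ℤ)
    (hab : Int.gcd a b = 1) (hcd : Int.gcd c d = 1)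
    (h : |a * d - b * c| = 1) :
    (∀ e f : ℤ, Int.gcd e f = 1 → |a * f - b * e| = 1 → |c * f - d * e| = 1 →
      (e, f) = (a + c, b + d) ∨ (e, f) = (-(a + c), -(b + d)) ∨
      (e, f) = (a - c, b - d) ∨ (e, f) = (-(a - c), -(b - d))) ∧
    {x : OnePoint ℚ | fareyGraph.Adj x (fareySlope a b) ∧ fareyGraph.Adj x (fareySlope c d)} =
      {fareySlope (a + c) (b + d), fareySlope (a - c) (b - d)} := by
  
  refine ⟨fun e f _ h1 h2 => part1 a b c d h e f h1 h2, ?_⟩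
  obtain ⟨ε₁, hε₁, hN₁, hD₁⟩ := slope_repr a b hab
  obtain ⟨ε₂, hε₂, hN₂, hD₂⟩ := slope_repr c d hcd
  have hadd : Int.gcd (a + c) (b + d) = 1 := gcd_comb a b c d h
  have hsub : Int.gcd (a - c) (b - d) = 1 := by
    apply gcd_comb a b (-c) (-d)
    rw [show a * -d - b * -c = -(a*d - b*c) by ring, abs_neg]; exact h
  obtain ⟨ε₃, hε₃, hN₃, hD₃⟩ := slope_repr (a+c) (b+d) hadd
  obtain ⟨ε₄, hε₄, hN₄, hD₄⟩ := slope_repr (a-c) (b-d) hsub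
  ext x
  simp only [Set.mem_setOf_eq, Set.mem_insert_iff, Set.mem_singleton_iff]
  constructor
  · rintro ⟨h1, h2⟩
    obtain ⟨hgx, hsx⟩ := vertex_repr x
    rw [adj_iff, hN₁, hD₁] at h1
    rw [adj_iff, hN₂, hD₂] at h2
    have h1' : |a * vDen x - b * vNum x| = 1 := by
      rw [show vNum x * (ε₁ * b) - vDen x * (ε₁ * a)
          = ε₁ * -(a * vDen x - b * vNum x) by ring, eps_abs hε₁, abs_neg] at h1
      exact h1
    have h2' : |c * vDen x - d * vNum x| = 1 := by
      rw [show vNum x * (ε₂ * d) - vDen x * (ε₂ * c)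
          = ε₂ * -(c * vDen x - d * vNum x) by ring, eps_abs hε₂, abs_neg] at h2
      exact h2
    rcases part1 a b c d h (vNum x) (vDen x) h1' h2' with hc | hc | hc | hc <;>
      rw [Prod.mk.injEq] at hc <;> obtain ⟨he, hf⟩ := hc <;>
      rw [he, hf] at hsx
    · exact Or.inl hsx.symm
    · rw [fareySlope_neg] at hsx; exact Or.inl hsx.symm
    · exact Or.inr hsx.symm
    · rw [fareySlope_neg] at hsx; exact Or.inr hsx.symm
  · rintro (rfl | rfl)
    · constructor
      · rw [adj_iff, hN₃, hD₃, hN₁, hD₁,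
          show ε₃ * (a+c) * (ε₁ * b) - ε₃ * (b+d) * (ε₁ * a)
            = ε₃ * (ε₁ * -(a * d - b * c)) by ring, eps_abs hε₃, eps_abs hε₁, abs_neg]
        exact h
      · rw [adj_iff, hN₃, hD₃, hN₂, hD₂,
          show ε₃ * (a+c) * (ε₂ * d) - ε₃ * (b+d) * (ε₂ * c)
            = ε₃ * (ε₂ * (a * d - b * c)) by ring, eps_abs hε₃, eps_abs hε₂]
        exact h
    · constructor
      · rw [adj_iff, hN₄, hD₄, hN₁, hD₁,
          show ε₄ * (a-c) * (ε₁ * b) - ε₄ * (b-d) * (ε₁ * a)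
            = ε₄ * (ε₁ * (a * d - b * c)) by ring, eps_abs hε₄, eps_abs hε₁]
        exact h
      · rw [adj_iff, hN₄, hD₄, hN₂, hD₂,
          show ε₄ * (a-c) * (ε₂ * d) - ε₄ * (b-d) * (ε₂ * c)
            = ε₄ * (ε₂ * (a * d - b * c)) by ring, eps_abs hε₄, eps_abs hε₂]
        exact h
end
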